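/- Every system on a finite lattice P is the meet of coatoms of the lattice of systems, where the coatoms are exactly the systems with exactly two fixed points (one of which is the maximum element of P). -/

import Mathlib

/-!
For `a ≠ ⊤` the map sending `x ≤ a` to `a` and everything else to `⊤` (the two-point system of
`a`) is the only system whose fixed points are `{a, ⊤}`. A system lying above it has its fixed
points among `{a, ⊤}`, so it is this map or the constant `⊤`; hence these maps are coatoms.
Conversely a coatom `c`, not being the constant `⊤`, has a fixed point `a ≠ ⊤`; it lies below the
two-point system of `a`, and so equals it. Finally every system
`f` is the pointwise meet of the two-point systems of its fixed points: `f x` is fixed, lies above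
`x`, and lies below the value at `x` of the two-point system of any fixed point.
-/

def IsSystem {P : Type*} [Lattice P] (f : P → P) : Prop :=
  (∀ a, a ≤ f a) ∧ Monotone f ∧ ∀ a, f (f a) = f a

/-- `c` is a coatom of the lattice of systems: it is covered by the maximum
system `fun _ => ⊤`. -/
def CoatomSys {P : Type*} [Lattice P] [OrderTop P] (c : P → P) : Prop :=
  IsSystem c ∧ c ≠ (fun _ => ⊤) ∧
    ∀ h : P → P, IsSystem h → (∀ a, c a ≤ h a) → h = c ∨ h = (fun _ => ⊤)

open Classical in
noncomputable def twoPointSystem {P : Type*} [Lattice P] [OrderTop P] (a : P) : P → P :=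
  fun x => if x ≤ a then a else ⊤

section TwoPointSystem

variable {P : Type*} [Lattice P] [OrderTop P] {a x : P}

theorem twoPointSystem_of_le (h : x ≤ a) : twoPointSystem a x = a := if_pos h

theorem twoPointSystem_of_not_le (h : ¬x ≤ a) : twoPointSystem a x = ⊤ := if_neg h

theorem le_twoPointSystem_self (x : P) : x ≤ twoPointSystem a x := by
  by_cases h : x ≤ a
  · rwa [twoPointSystem_of_le h]
  · rw [twoPointSystem_of_not_le h]; exact le_top

theorem twoPointSystem_isSystem (a : P) : IsSystem (twoPointSystem a) := by
  refine ⟨fun x => le_twoPointSystem_self x, fun x y hxy => ?_, fun x => ?_⟩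
  · by_cases hy : y ≤ a
    · rw [twoPointSystem_of_le hy, twoPointSystem_of_le (hxy.trans hy)]
    · rw [twoPointSystem_of_not_le hy]; exact le_top
  · by_cases hx : x ≤ a
    · rw [twoPointSystem_of_le hx, twoPointSystem_of_le le_rfl]
    · rw [twoPointSystem_of_not_le hx]
      exact top_le_iff.mp (le_twoPointSystem_self ⊤)

theorem twoPointSystem_ne_top (ha : a ≠ ⊤) : twoPointSystem a ≠ fun _ => ⊤ := fun h =>
  ha ((twoPointSystem_of_le le_rfl).symm.trans (congrFun h a))

theorem fixedPoints_twoPointSystem (ha : a ≠ ⊤) : {x | twoPointSystem a x = x} = {a, ⊤} := by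
  ext x
  simp only [Set.mem_ofPred_eq, Set.mem_insert_iff, Set.mem_singleton_iff]
  by_cases hx : x ≤ a
  · rw [twoPointSystem_of_le hx]
    refine ⟨fun h => Or.inl h.symm, fun h => h.elim Eq.symm fun h => ?_⟩
    exact (ha (top_le_iff.mp (h ▸ hx))).elim
  · rw [twoPointSystem_of_not_le hx]
    exact ⟨fun h => Or.inr h.symm, fun h => h.elim (fun h => (hx h.le).elim) Eq.symm⟩

end TwoPointSystem

namespace IsSystem

variable {P : Type*} [Lattice P] {f : P → P}

theorem le_apply (hf : IsSystem f) (x : P) : x ≤ f x := hf.1 x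

theorem monotone (hf : IsSystem f) : Monotone f := hf.2.1

theorem idempotent (hf : IsSystem f) (x : P) : f (f x) = f x := hf.2.2 x

theorem apply_le_of_le_fixed (hf : IsSystem f) {a x : P} (ha : f a = a) (hx : x ≤ a) : f x ≤ a :=
  ha ▸ hf.monotone hx

variable [OrderTop P]

theorem le_twoPointSystem (hf : IsSystem f) {a : P} (ha : f a = a) (x : P) :
    f x ≤ twoPointSystem a x := by
  by_cases hx : x ≤ a
  · rw [twoPointSystem_of_le hx]; exact hf.apply_le_of_le_fixed ha hx
  · rw [twoPointSystem_of_not_le hx]; exact le_top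

theorem eq_twoPointSystem_of_fixed (hf : IsSystem f) {a : P} (ha : f a = a)
    (hfix : ∀ x, f x = x → x = a ∨ x = ⊤) : f = twoPointSystem a := by
  funext x
  rcases hfix _ (hf.idempotent x) with hxa | hxt
  · rw [hxa, twoPointSystem_of_le (hxa ▸ hf.le_apply x)]
  · by_cases hx : x ≤ a
    · rw [twoPointSystem_of_le hx, hxt]
      -- `f x = ⊤` lies below `a`, so `a = ⊤` as well
      exact (top_le_iff.mp (hxt ▸ hf.apply_le_of_le_fixed ha hx)).symm
    · rw [twoPointSystem_of_not_le hx, hxt]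

theorem eq_twoPointSystem (hf : IsSystem f) {a : P} (hfix : {x | f x = x} = {a, ⊤}) :
    f = twoPointSystem a := by
  have hmem : ∀ x, f x = x ↔ x = a ∨ x = ⊤ := fun x => Set.ext_iff.mp hfix x
  exact hf.eq_twoPointSystem_of_fixed ((hmem a).mpr (Or.inl rfl)) fun x => (hmem x).mp

theorem eq_inf_twoPointSystem [Finite P] (hf : IsSystem f) (x : P) :
    f x = (Set.toFinite {a | f a = a ∧ a ≠ ⊤}).toFinset.inf fun a => twoPointSystem a x := by
  refine le_antisymm (Finset.le_inf fun a ha => ?_) ?_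
  · exact hf.le_twoPointSystem ((Set.Finite.mem_toFinset _).mp ha).1 x
  · by_cases hfx : f x = ⊤
    · rw [hfx]; exact le_top
    · have hmem : f x ∈ (Set.toFinite {a | f a = a ∧ a ≠ ⊤}).toFinset :=
        (Set.Finite.mem_toFinset _).mpr ⟨hf.idempotent x, hfx⟩
      calc _ ≤ twoPointSystem (f x) x := Finset.inf_le (f := fun a => twoPointSystem a x) hmem
        _ = f x := twoPointSystem_of_le (hf.le_apply x)

end IsSystem

section Coatoms

variable {P : Type*} [Lattice P] [OrderTop P]

theorem twoPointSystem_coatomSys {a : P} (ha : a ≠ ⊤) : CoatomSys (twoPointSystem a) := by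
  refine ⟨twoPointSystem_isSystem a, twoPointSystem_ne_top ha, fun h hh hle => ?_⟩
  have hfix : ∀ x, h x = x → x = a ∨ x = ⊤ := by
    intro x hx
    exact (Set.ext_iff.mp (fixedPoints_twoPointSystem ha) x).mp
      (le_antisymm ((hle x).trans_eq hx) (le_twoPointSystem_self x))
  by_cases hfa : h a = a
  · exact Or.inl (hh.eq_twoPointSystem_of_fixed hfa hfix)
  · refine Or.inr (funext fun x => (hfix _ (hh.idempotent x)).resolve_left ?_)
    intro hxa
    exact hfa (hxa ▸ hh.idempotent x)

theorem CoatomSys.exists_fixedPoints_eq {c : P → P} (hc : CoatomSys c) :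
    ∃ a : P, a ≠ ⊤ ∧ {x | c x = x} = {a, ⊤} := by
  obtain ⟨hsys, hne, hmax⟩ := hc
  obtain ⟨x, hx⟩ : ∃ x, c x ≠ ⊤ := by
    by_contra! h
    exact hne (funext h)
  have hfix := hsys.idempotent x
  refine ⟨c x, hx, ?_⟩
  rcases hmax _ (twoPointSystem_isSystem (c x)) (hsys.le_twoPointSystem hfix) with h | h
  · have := fixedPoints_twoPointSystem hx
    rwa [h] at this
  · exact (twoPointSystem_ne_top hx h).elim

end Coatoms

theorem stmt14 {P : Type*} [Lattice P] [Fintype P] [OrderTop P] :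
    (∀ c : P → P, CoatomSys c ↔
      (IsSystem c ∧ ∃ a : P, a ≠ ⊤ ∧ {x | c x = x} = {a, ⊤})) ∧
    (∀ f : P → P, IsSystem f →
      ∃ C : Finset (P → P), (∀ c ∈ C, CoatomSys c) ∧
        ∀ a, f a = C.inf (fun c => c a)) := by
  classical
  refine ⟨fun c => ⟨fun hc => ⟨hc.1, hc.exists_fixedPoints_eq⟩, ?_⟩, fun f hf => ?_⟩
  · rintro ⟨hc, a, ha, hfix⟩
    rw [hc.eq_twoPointSystem hfix]
    exact twoPointSystem_coatomSys ha
  · refine ⟨(Set.toFinite {a | f a = a ∧ a ≠ ⊤}).toFinset.image twoPointSystem, ?_, fun x => ?_⟩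
    · simp only [Finset.mem_image, Set.Finite.mem_toFinset, Set.mem_ofPred_eq]
      rintro _ ⟨a, ⟨-, ha⟩, rfl⟩
      exact twoPointSystem_coatomSys ha
    · rw [Finset.inf_image]
      exact hf.eq_inf_twoPointSystem x
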